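/- arXiv:1501.00213 — 2 statements merged into one kernel-verified Lean document; each statement's English description precedes it below -/
import Mathlib

section
/- Suppose three differentiable nonnegative functions $\mathcal{G},\mathcal{H},\mathcal{K}:[0,\Omega]\to\mathbb{R}$ and two nonnegative functions $P,Q:[0,\Omega]\to\mathbb{R}$ satisfy, for every $\epsilon>0$, with some constant $C=C(\epsilon)\ge 0$: $\dot{\mathcal{G}}\le C(\mathcal{G}+\mathcal{H})+2\epsilon P$, $\dot{\mathcal{H}}\le C(\mathcal{G}+\mathcal{H})-2(1-\epsilon)P-4\alpha Q$, and $\dot{\mathcal{K}}\le C(\mathcal{G}+\mathcal{H})+2\epsilon P-2(1+2\alpha(n-1))Q$, where $\alpha+1/(2(n-1))>0$ and $n\ge 2$. If $\mathcal{G}(0)=\mathcal{H}(0)=\mathcal{K}(0)=0$, then $\mathcal{G}\equiv\mathcal{H}\equiv 0$ on $[0,\Omega]$. -/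
/-!
Put `β = 1 + 2α(n-1)`, which is positive because `n ≥ 2`. For `r = (1 + 2|α|)/β` and
`ε = 1/(2+r)`, the energy `𝓔 = 𝒢 + ℋ + r𝒦` satisfies `𝓔' ≤ (2+r) C(ε) 𝓔`: the `P`-terms
cancel since `2ε(2+r) = 2`, the `Q`-terms combine to `-(4α + 2rβ) Q ≤ 0`, and
`𝒢 + ℋ ≤ 𝓔`. Since `𝓔(0) = 0`, Grönwall's inequality forces `𝓔 ≤ 0`, and as all three
functions are nonnegative, `𝒢 = ℋ = 0`.
-/

open Set

theorem nonpos_of_deriv_le_mul_self_of_nonpos_left {f f' : ℝ → ℝ} {K a b : ℝ}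
    (hf : ∀ t ∈ Icc a b, HasDerivAt f (f' t) t) (bound : ∀ t ∈ Icc a b, f' t ≤ K * f t)
    (ha : f a ≤ 0) : ∀ t ∈ Icc a b, f t ≤ 0 := by
  intro t ht
  have hcont : ContinuousOn f (Icc a b) := fun x hx => (hf x hx).continuousAt.continuousWithinAt
  calc f t ≤ gronwallBound 0 K 0 (t - a) :=
        le_gronwallBound_of_liminf_deriv_right_le hcont
          (fun x hx _ hr =>
            (hf x (Ico_subset_Icc_self hx)).hasDerivWithinAt.liminf_right_slope_le hr)
          ha (fun x hx => by simpa using bound x (Ico_subset_Icc_self hx)) t ht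
    _ = 0 := gronwallBound_ε0_δ0 K _

theorem one_add_two_mul_mul_pos {α m : ℝ} (hm : 0 < m) (hα : α + 1 / (2 * m) > 0) :
    0 < 1 + 2 * α * m := by
  have key : 1 + 2 * α * m = 2 * m * (α + 1 / (2 * m)) := by field_simp; ring
  rw [key]
  positivity

theorem add_add_mul_le_of_system {α β r ε C g h k p q g' h' k' : ℝ}
    (hr : 0 ≤ r) (hrβ : -2 * α ≤ r * β) (hε : ε * (2 + r) ≤ 1) (hC : 0 ≤ C)
    (hk : 0 ≤ k) (hp : 0 ≤ p) (hq : 0 ≤ q)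
    (hg' : g' ≤ C * (g + h) + 2 * ε * p)
    (hh' : h' ≤ C * (g + h) - 2 * (1 - ε) * p - 4 * α * q)
    (hk' : k' ≤ C * (g + h) + 2 * ε * p - 2 * β * q) :
    g' + h' + r * k' ≤ (2 + r) * C * (g + h + r * k) := by
  have hP : (2 * ε * (2 + r) - 2) * p ≤ 0 := mul_nonpos_of_nonpos_of_nonneg (by linarith) hp
  have hQ : -(4 * α + 2 * (r * β)) * q ≤ 0 := mul_nonpos_of_nonpos_of_nonneg (by linarith) hq
  have hE : (2 + r) * C * (g + h) ≤ (2 + r) * C * (g + h + r * k) :=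
    mul_le_mul_of_nonneg_left (by linarith [mul_nonneg hr hk]) (by positivity)
  have hk'r := mul_le_mul_of_nonneg_left hk' hr
  calc g' + h' + r * k'
      ≤ (2 + r) * C * (g + h) + (2 * ε * (2 + r) - 2) * p - (4 * α + 2 * (r * β)) * q := by
        linarith
    _ ≤ (2 + r) * C * (g + h + r * k) := by linarith

theorem stmt2_general (Ω : ℝ) (n : ℕ) (hn : 2 ≤ n) (α : ℝ)
    (hα : α + 1 / (2 * ((n : ℝ) - 1)) > 0)
    (G H K P Q G' H' K' : ℝ → ℝ)
    (hGd : ∀ t ∈ Set.Icc (0 : ℝ) Ω, HasDerivAt G (G' t) t)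
    (hHd : ∀ t ∈ Set.Icc (0 : ℝ) Ω, HasDerivAt H (H' t) t)
    (hKd : ∀ t ∈ Set.Icc (0 : ℝ) Ω, HasDerivAt K (K' t) t)
    (hGpos : ∀ t ∈ Set.Icc (0 : ℝ) Ω, 0 ≤ G t)
    (hHpos : ∀ t ∈ Set.Icc (0 : ℝ) Ω, 0 ≤ H t)
    (hKpos : ∀ t ∈ Set.Icc (0 : ℝ) Ω, 0 ≤ K t)
    (hPpos : ∀ t ∈ Set.Icc (0 : ℝ) Ω, 0 ≤ P t)
    (hQpos : ∀ t ∈ Set.Icc (0 : ℝ) Ω, 0 ≤ Q t)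
    (hsys : ∀ ε : ℝ, 0 < ε → ∃ C : ℝ, 0 ≤ C ∧ ∀ t ∈ Set.Icc (0 : ℝ) Ω,
      G' t ≤ C * (G t + H t) + 2 * ε * P t ∧
      H' t ≤ C * (G t + H t) - 2 * (1 - ε) * P t - 4 * α * Q t ∧
      K' t ≤ C * (G t + H t) + 2 * ε * P t
        - 2 * (1 + 2 * α * ((n : ℝ) - 1)) * Q t)
    (h0 : G 0 = 0 ∧ H 0 = 0 ∧ K 0 = 0) :
    ∀ t ∈ Set.Icc (0 : ℝ) Ω, G t = 0 ∧ H t = 0 := by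
  have hn1 : (0 : ℝ) < n - 1 := by
    have : (2 : ℝ) ≤ n := by exact_mod_cast hn
    linarith
  set β := 1 + 2 * α * ((n : ℝ) - 1)
  have hβ : 0 < β := one_add_two_mul_mul_pos hn1 hα
  set r := (1 + 2 * |α|) / β
  have hr : 0 < r := by positivity
  have hrβ : -2 * α ≤ r * β := by
    rw [div_mul_cancel₀ _ hβ.ne']
    linarith [neg_abs_le α]
  obtain ⟨C, hC, hCsys⟩ := hsys (1 / (2 + r)) (by positivity)
  have hE : ∀ t ∈ Icc (0 : ℝ) Ω, G t + H t + r * K t ≤ 0 :=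
    nonpos_of_deriv_le_mul_self_of_nonpos_left
      (fun t ht => ((hGd t ht).add (hHd t ht)).add ((hKd t ht).const_mul r))
      (fun t ht => add_add_mul_le_of_system hr.le hrβ (div_mul_cancel₀ 1 (by positivity)).le hC
        (hKpos t ht) (hPpos t ht) (hQpos t ht) (hCsys t ht).1 (hCsys t ht).2.1 (hCsys t ht).2.2)
      (by simp [h0.1, h0.2.1, h0.2.2])
  intro t ht
  have := mul_nonneg hr.le (hKpos t ht)
  constructor <;> linarith [hE t ht, hGpos t ht, hHpos t ht]

/-- From the system of differential inequalities of Theorem 2.2, vanishing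
initial data forces `𝒢 ≡ ℋ ≡ 0` on `[0, Ω]`. -/
theorem stmt2 (Ω : ℝ) (hΩ : 0 ≤ Ω) (n : ℕ) (hn : 2 ≤ n) (α : ℝ)
    (hα : α + 1 / (2 * ((n : ℝ) - 1)) > 0)
    (G H K P Q G' H' K' : ℝ → ℝ)
    (hGd : ∀ t ∈ Set.Icc (0 : ℝ) Ω, HasDerivAt G (G' t) t)
    (hHd : ∀ t ∈ Set.Icc (0 : ℝ) Ω, HasDerivAt H (H' t) t)
    (hKd : ∀ t ∈ Set.Icc (0 : ℝ) Ω, HasDerivAt K (K' t) t)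
    (hGpos : ∀ t ∈ Set.Icc (0 : ℝ) Ω, 0 ≤ G t)
    (hHpos : ∀ t ∈ Set.Icc (0 : ℝ) Ω, 0 ≤ H t)
    (hKpos : ∀ t ∈ Set.Icc (0 : ℝ) Ω, 0 ≤ K t)
    (hPpos : ∀ t ∈ Set.Icc (0 : ℝ) Ω, 0 ≤ P t)
    (hQpos : ∀ t ∈ Set.Icc (0 : ℝ) Ω, 0 ≤ Q t)
    (hsys : ∀ ε : ℝ, 0 < ε → ∃ C : ℝ, 0 ≤ C ∧ ∀ t ∈ Set.Icc (0 : ℝ) Ω,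
      G' t ≤ C * (G t + H t) + 2 * ε * P t ∧
      H' t ≤ C * (G t + H t) - 2 * (1 - ε) * P t - 4 * α * Q t ∧
      K' t ≤ C * (G t + H t) + 2 * ε * P t
        - 2 * (1 + 2 * α * ((n : ℝ) - 1)) * Q t)
    (h0 : G 0 = 0 ∧ H 0 = 0 ∧ K 0 = 0) :
    ∀ t ∈ Set.Icc (0 : ℝ) Ω, G t = 0 ∧ H t = 0 :=
  stmt2_general Ω n hn α hα G H K P Q G' H' K' hGd hHd hKd hGpos hHpos hKpos hPpos hQpos hsys h0
end

section
/- Let $H$ be a real inner product space, $L:D\subseteq H\to H$ a linear map, and $X:[0,\Omega]\to D$ a differentiable path. Suppose there exist constants $\epsilon>0$, $C\ge 0$, and a seminorm $q$ on $D$ such that $\langle LX, X\rangle \le -\epsilon\, q(X)^2 + C\|X\|^2$ (Gårding inequality) and $\|\dot X - LX\| \le C(\|X\| + q(X))$ for all $t$. If $X(0)=0$, then $X\equiv 0$ on $[0,\Omega]$. -/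
/-!
Energy estimate: by the Gårding inequality, the perturbation bound and Young's inequality
`C ‖X‖ q(X) ≤ ε q(X)² + C²/(4ε) ‖X‖²`, the `q`-terms cancel and
`d/dt ‖X‖² = 2⟪Ẋ, X⟫ ≤ K ‖X‖²`. Grönwall's inequality with `‖X 0‖² = 0` then forces `X ≡ 0`.
-/

open Set
open scoped RealInnerProductSpace

section Energy

variable {F : Type*} [NormedAddCommGroup F] [InnerProductSpace ℝ F]

theorem eq_zero_of_inner_deriv_le_mul_norm_sq_of_eq_zero_right {f f' : ℝ → F} {K a b : ℝ}
    (hf : ContinuousOn f (Icc a b)) (hf' : ∀ x ∈ Ico a b, HasDerivWithinAt f (f' x) (Ici x) x)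
    (ha : f a = 0) (bound : ∀ x ∈ Ico a b, ⟪f x, f' x⟫ ≤ K * ‖f x‖ ^ 2) :
    ∀ x ∈ Icc a b, f x = 0 := by
  have henergy : ∀ x ∈ Icc a b, ‖f x‖ ^ 2 ≤ gronwallBound 0 (2 * K) 0 (x - a) :=
    le_gronwallBound_of_liminf_deriv_right_le (f' := fun x => 2 * ⟪f x, f' x⟫)
      ((continuous_norm.pow 2).comp_continuousOn hf)
      (fun x hx _ hr => (hf' x hx).norm_sq.liminf_right_slope_le hr) (by simp [ha])
      (fun x hx => by linarith [bound x hx])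
  intro x hx
  have hsq : ‖f x‖ ^ 2 ≤ 0 := by simpa only [gronwallBound_ε0_δ0] using henergy x hx
  exact norm_eq_zero.mp (pow_eq_zero_iff two_ne_zero |>.mp (le_antisymm hsq (by positivity)))

theorem inner_le_of_garding_of_norm_sub_le {x y v : F} {r ε C : ℝ} (hε : 0 < ε)
    (hgarding : ⟪y, x⟫ ≤ -ε * r ^ 2 + C * ‖x‖ ^ 2) (hv : ‖v - y‖ ≤ C * (‖x‖ + r)) :
    ⟪v, x⟫ ≤ (2 * C + C ^ 2 / (4 * ε)) * ‖x‖ ^ 2 := by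
  have hpert : ⟪v - y, x⟫ ≤ C * (‖x‖ + r) * ‖x‖ :=
    (real_inner_le_norm _ _).trans (mul_le_mul_of_nonneg_right hv (norm_nonneg x))
  have young : C * ‖x‖ * r ≤ ε * r ^ 2 + C ^ 2 / (4 * ε) * ‖x‖ ^ 2 := by
    have hsq_nonneg : 0 ≤ (2 * ε * r - C * ‖x‖) ^ 2 / (4 * ε) := by positivity
    have expand : (2 * ε * r - C * ‖x‖) ^ 2 / (4 * ε)
        = ε * r ^ 2 + C ^ 2 / (4 * ε) * ‖x‖ ^ 2 - C * ‖x‖ * r := by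
      field_simp
      ring
    linarith
  calc ⟪v, x⟫ = ⟪v - y, x⟫ + ⟪y, x⟫ := by rw [← inner_add_left, sub_add_cancel]
    _ ≤ (2 * C + C ^ 2 / (4 * ε)) * ‖x‖ ^ 2 := by linarith

end Energy

theorem stmt16_general {H : Type*} [NormedAddCommGroup H] [InnerProductSpace ℝ H]
    (D : Subspace ℝ H) (L : D →ₗ[ℝ] H) (q : Seminorm ℝ D)
    (Ω ε C : ℝ) (hε : 0 < ε)
    (hGarding : ∀ x : D, ⟪L x, (x : H)⟫ ≤ -ε * q x ^ 2 + C * ‖x‖ ^ 2)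
    (X X' : ℝ → D)
    (hX : ∀ t ∈ Set.Icc (0 : ℝ) Ω, HasDerivAt X (X' t) t)
    (hpert : ∀ t ∈ Set.Icc (0 : ℝ) Ω,
      ‖((X' t : H)) - L (X t)‖ ≤ C * (‖X t‖ + q (X t)))
    (h0 : X 0 = 0) :
    ∀ t ∈ Set.Icc (0 : ℝ) Ω, X t = 0 :=
  eq_zero_of_inner_deriv_le_mul_norm_sq_of_eq_zero_right
    (fun t ht => (hX t ht).continuousAt.continuousWithinAt)
    (fun t ht => (hX t (Ico_subset_Icc_self ht)).hasDerivWithinAt) h0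
    (fun t ht => by
      rw [real_inner_comm]
      exact inner_le_of_garding_of_norm_sub_le (x := (X t : H)) hε (hGarding (X t))
        (hpert t (Ico_subset_Icc_self ht)))

/-- Abstract skeleton of the general uniqueness theorem: a differentiable
curve `X` in a subspace `D` of a real inner product space satisfying a
Gårding inequality `⟪LX, X⟫ ≤ -ε q(X)² + C‖X‖²` and the perturbed evolution
bound `‖Ẋ - LX‖ ≤ C(‖X‖ + q(X))` vanishes identically if `X(0) = 0`. -/
theorem stmt16 {H : Type*} [NormedAddCommGroup H] [InnerProductSpace ℝ H]
    (D : Subspace ℝ H) (L : D →ₗ[ℝ] H) (q : Seminorm ℝ D)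
    (Ω ε C : ℝ) (hΩ : 0 ≤ Ω) (hε : 0 < ε) (hC : 0 ≤ C)
    (hGarding : ∀ x : D, ⟪L x, (x : H)⟫ ≤ -ε * q x ^ 2 + C * ‖x‖ ^ 2)
    (X X' : ℝ → D)
    (hX : ∀ t ∈ Set.Icc (0 : ℝ) Ω, HasDerivAt X (X' t) t)
    (hpert : ∀ t ∈ Set.Icc (0 : ℝ) Ω,
      ‖((X' t : H)) - L (X t)‖ ≤ C * (‖X t‖ + q (X t)))
    (h0 : X 0 = 0) :
    ∀ t ∈ Set.Icc (0 : ℝ) Ω, X t = 0 :=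
  stmt16_general D L q Ω ε C hε hGarding X X' hX hpert h0
end
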